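/- arXiv:math/9809166 — 2 statements merged into one kernel-verified Lean document; each statement's English description precedes it below -/
import Mathlib

section
/- Let C ≥ 1 be an integer. Then the group GL_n(𝒪), acting by left multiplication on the set of n×n matrices m over 𝒪 satisfying det m ≠ 0 and |N_{K/ℚ}(det m)| ≤ C, has only finitely many orbits. -/
open NumberField Matrix

set_option maxHeartbeats 1000000
set_option synthInstance.maxHeartbeats 400000

section Aux

variable {R : Type*} [CommRing R] [IsDomain R] {n : ℕ}

/-- Right cancellation of a matrix with nonzero determinant over a domain. -/
private theorem aux_mul_cancel_right {m X Y : Matrix (Fin n) (Fin n) R}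
    (hm : m.det ≠ 0) (h : X * m = Y * m) : X = Y := by
  have h2 : X * (m * m.adjugate) = Y * (m * m.adjugate) := by
    rw [← Matrix.mul_assoc, ← Matrix.mul_assoc, h]
  rw [Matrix.mul_adjugate, Matrix.mul_smul, Matrix.mul_smul, Matrix.mul_one, Matrix.mul_one] at h2
  ext i j
  exact mul_left_cancel₀ hm (by simpa using congrFun (congrFun h2 i) j)

private theorem aux_row_mem (m : Matrix (Fin n) (Fin n) R) (i : Fin n) :
    m i ∈ LinearMap.range m.vecMulLinear := by
  refine ⟨Pi.single i 1, ?_⟩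
  funext j
  simp [Matrix.vecMul, dotProduct, Pi.single_apply]

private theorem aux_det_smul_mem (m : Matrix (Fin n) (Fin n) R) (y : Fin n → R) :
    m.det • y ∈ LinearMap.range m.vecMulLinear := by
  refine ⟨y ᵥ* m.adjugate, ?_⟩
  rw [Matrix.vecMulLinear_apply, Matrix.vecMul_vecMul, Matrix.adjugate_mul]
  funext j
  simp [Matrix.vecMul, dotProduct, Matrix.one_apply, mul_comm]

/-- If two matrices with nonzero determinant have the same row span, they differ by a
left `GL` factor. -/
private theorem aux_exists_GL {t m : Matrix (Fin n) (Fin n) R}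
    (ht : t.det ≠ 0) (hm : m.det ≠ 0)
    (hft : LinearMap.range t.vecMulLinear = LinearMap.range m.vecMulLinear) :
    ∃ g : GL (Fin n) R, (g : Matrix (Fin n) (Fin n) R) * t = m := by
  have hA : ∀ i, ∃ a : Fin n → R, a ᵥ* t = m i := by
    intro i
    have : m i ∈ LinearMap.range t.vecMulLinear := hft ▸ aux_row_mem m i
    obtain ⟨a, ha⟩ := this
    exact ⟨a, ha⟩
  have hB : ∀ i, ∃ b : Fin n → R, b ᵥ* m = t i := by
    intro i
    have : t i ∈ LinearMap.range m.vecMulLinear := hft ▸ aux_row_mem t i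
    obtain ⟨b, hb⟩ := this
    exact ⟨b, hb⟩
  choose A hA using hA
  choose B hB using hB
  have hAt : (Matrix.of A) * t = m := by
    ext i j
    have := congrFun (hA i) j
    simpa [Matrix.mul_apply, Matrix.vecMul, dotProduct] using this
  have hBm : (Matrix.of B) * m = t := by
    ext i j
    have := congrFun (hB i) j
    simpa [Matrix.mul_apply, Matrix.vecMul, dotProduct] using this
  have hAB : (Matrix.of A) * (Matrix.of B) = 1 := by
    apply aux_mul_cancel_right hm
    rw [Matrix.mul_assoc, hBm, hAt, Matrix.one_mul]
  have hBA : (Matrix.of B) * (Matrix.of A) = 1 := by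
    apply aux_mul_cancel_right ht
    rw [Matrix.mul_assoc, hAt, hBm, Matrix.one_mul]
  exact ⟨⟨Matrix.of A, Matrix.of B, hAB, hBA⟩, hAt⟩

end Aux

/-- The left-multiplication action of `GL_n(𝒪)` on the set of `n × n`
matrices `m` over `𝒪` with `det m ≠ 0` and `|N_{K/ℚ}(det m)| ≤ C` has finitely many
orbits: there is a finite set `T` of such matrices meeting every orbit. -/
theorem GL_orbits_of_bounded_norm_finite
    (K : Type*) [Field K] [NumberField K] (n : ℕ) (C : ℤ) (hC : 1 ≤ C) :
    ∃ T : Finset (Matrix (Fin n) (Fin n) (𝓞 K)),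
      (∀ t ∈ T, t.det ≠ 0 ∧ |Algebra.norm ℤ t.det| ≤ C) ∧
      ∀ m : Matrix (Fin n) (Fin n) (𝓞 K), m.det ≠ 0 → |Algebra.norm ℤ m.det| ≤ C →
        ∃ t ∈ T, ∃ g : GL (Fin n) (𝓞 K), (g : Matrix (Fin n) (Fin n) (𝓞 K)) * t = m := by
  classical
  set R := 𝓞 K
  set k : ℕ := (C.toNat).factorial with hk_def
  have hk : (k : R) ≠ 0 := by
    exact_mod_cast Nat.cast_ne_zero.mpr (Nat.factorial_ne_zero _)
  set f : Matrix (Fin n) (Fin n) R → Submodule R (Fin n → R) :=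
    fun m => LinearMap.range m.vecMulLinear with hf_def
  set P : Submodule R (Fin n → R) :=
    Submodule.pi Set.univ (fun _ : Fin n => Ideal.span {(k : R)}) with hP_def
  -- Step 1: every relevant row span contains `P`
  have key : ∀ m : Matrix (Fin n) (Fin n) R, m.det ≠ 0 → |Algebra.norm ℤ m.det| ≤ C →
      P ≤ f m := by
    intro m hdet hnorm x hx
    rw [hP_def, Submodule.mem_pi] at hx
    have hxi : ∀ i, (k : R) ∣ x i := by
      intro i
      exact Ideal.mem_span_singleton.mp (hx i (Set.mem_univ i))
    choose c hc using hxi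
    -- det m divides (k : R)
    have hdvd1 : m.det ∣ ((Algebra.norm ℤ m.det).natAbs : R) := by
      apply Ideal.mem_span_singleton.mp
      rw [← Ideal.absNorm_span_singleton]
      exact Ideal.absNorm_mem _
    have hnz : (Algebra.norm ℤ m.det).natAbs ≠ 0 := by
      simp only [ne_eq, Int.natAbs_eq_zero]
      exact Algebra.norm_ne_zero_iff.mpr hdet
    have hle : (Algebra.norm ℤ m.det).natAbs ≤ C.toNat := by
      have h1 : ((Algebra.norm ℤ m.det).natAbs : ℤ) ≤ C := by
        rwa [Int.abs_eq_natAbs] at hnorm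
      omega
    have hdvd2 : ((Algebra.norm ℤ m.det).natAbs : R) ∣ (k : R) :=
      Nat.cast_dvd_cast (Nat.dvd_factorial (Nat.pos_of_ne_zero hnz) hle)
    obtain ⟨d, hd⟩ := hdvd1.trans hdvd2
    have hx_eq : x = m.det • fun i => d * c i := by
      funext i
      simp only [Pi.smul_apply, smul_eq_mul]
      rw [hc i, hd]
      ring
    rw [hx_eq]
    exact aux_det_smul_mem m _
  -- Step 2: finiteness of the set of submodules above `P`
  haveI : Finite (R ⧸ Ideal.span {(k : R)}) := by
    haveI := Ideal.finiteQuotientOfFreeOfNeBot (Ideal.span {(k : R)})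
      (by rwa [ne_eq, Ideal.span_singleton_eq_bot])
    infer_instance
  haveI : Finite ((Fin n → R) ⧸ P) :=
    Finite.of_equiv _ (Submodule.quotientPi (fun _ : Fin n => Ideal.span {(k : R)})).symm.toEquiv
  haveI : Finite (Submodule R ((Fin n → R) ⧸ P)) :=
    Finite.of_injective (fun M => (M : Set ((Fin n → R) ⧸ P))) SetLike.coe_injective
  haveI : Finite {M : Submodule R (Fin n → R) // P ≤ M} :=
    Finite.of_equiv _ (Submodule.comapMkQRelIso P).toEquiv
  have Sfin : {M : Submodule R (Fin n → R) | P ≤ M}.Finite := by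
    haveI : Finite ↥{M : Submodule R (Fin n → R) | P ≤ M} :=
      Finite.of_equiv {M : Submodule R (Fin n → R) // P ≤ M}
        (Equiv.subtypeEquivRight fun M => Iff.rfl)
    exact Set.toFinite _
  -- Step 3: assemble
  set X : Set (Matrix (Fin n) (Fin n) R) :=
    {m | m.det ≠ 0 ∧ |Algebra.norm ℤ m.det| ≤ C} with hX_def
  have hfin : (f '' X).Finite := by
    apply Sfin.subset
    rintro M ⟨m, hm, rfl⟩
    exact key m hm.1 hm.2
  set s : Submodule R (Fin n → R) → Matrix (Fin n) (Fin n) R :=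
    fun M => if h : M ∈ f '' X then h.choose else 0 with hs_def
  have hs_spec : ∀ M (h : M ∈ f '' X), s M ∈ X ∧ f (s M) = M := by
    intro M h
    rw [hs_def]
    simp only [dif_pos h]
    obtain ⟨hx, hfx⟩ := h.choose_spec
    exact ⟨hx, hfx⟩
  refine ⟨hfin.toFinset.image s, ?_, ?_⟩
  · intro t ht
    simp only [Finset.mem_image, Set.Finite.mem_toFinset] at ht
    obtain ⟨M, hM, rfl⟩ := ht
    exact (hs_spec M hM).1
  · intro m hdet hnorm
    have hmX : m ∈ X := ⟨hdet, hnorm⟩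
    have hM : f m ∈ f '' X := ⟨m, hmX, rfl⟩
    refine ⟨s (f m), ?_, ?_⟩
    · simp only [Finset.mem_image, Set.Finite.mem_toFinset]
      exact ⟨f m, hM, rfl⟩
    · obtain ⟨⟨hdet', _⟩, hfeq⟩ := hs_spec (f m) hM
      exact aux_exists_GL hdet' hdet hfeq
end

section
/- Let Γ be a finite-index subgroup of SL_n(𝒪) and let C ≥ 1 be an integer. Let 𝓜(C) ⊆ 𝓜 be the set of modular symbols [m₁,…,mₙ] arising as the columns of some n×n matrix m over 𝒪 with |N_{K/ℚ}(det m)| ≤ C. Then the quotient Γ\𝓜(C) of 𝓜(C) by the natural Γ-action is finite. -/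
open NumberField FreeAbelianGroup

/-- A nonzero point of `Kⁿ`. -/
abbrev NZVec (K : Type*) [Field K] (n : ℕ) : Type _ := {v : Fin n → K // v ≠ 0}

/-- The set of defining relations for minimal modular symbols, inside the free abelian
group on `n`-tuples of nonzero points of `Kⁿ`:
(1) `[v₁,…,vₙ] = sgn(τ)[τ(v₁),…,τ(vₙ)]`;
(2) `[v₁,…,q vᵢ,…,vₙ] = [v₁,…,vₙ]` for `q ∈ Kˣ`;
(3) `[v₁,…,vₙ] = 0` when the `vᵢ` are linearly dependent;
(4) `Σᵢ (−1)ⁱ [v₀,…,v̂ᵢ,…,vₙ] = 0`. -/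
def modularSymbolRels (K : Type*) [Field K] (n : ℕ) :
    Set (FreeAbelianGroup (Fin n → NZVec K n)) :=
  {z | ∃ (v : Fin n → NZVec K n) (τ : Equiv.Perm (Fin n)),
      z = of v - (Equiv.Perm.sign τ : ℤ) • of (fun i => v (τ i))} ∪
  {z | ∃ (v : Fin n → NZVec K n) (i : Fin n) (q : Kˣ)
      (h : (q : K) • (v i : Fin n → K) ≠ 0),
      z = of (Function.update v i ⟨(q : K) • (v i : Fin n → K), h⟩) - of v} ∪
  {z | ∃ v : Fin n → NZVec K n,
      ¬ LinearIndependent K (fun i => (v i : Fin n → K)) ∧ z = of v} ∪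
  {z | ∃ v : Fin (n + 1) → NZVec K n,
      z = ∑ i : Fin (n + 1), ((-1 : ℤ) ^ (i : ℕ)) • of (fun j => v (i.succAbove j))}

/-- The group `𝓜` of minimal modular symbols: the free abelian group on `n`-tuples of
nonzero points of `Kⁿ`, modulo the relations (1)–(4). -/
abbrev ModularSymbols (K : Type*) [Field K] (n : ℕ) : Type _ :=
  FreeAbelianGroup (Fin n → NZVec K n) ⧸ AddSubgroup.closure (modularSymbolRels K n)

/-- The `i`-th column of a matrix over `𝒪`, viewed as a point of `Kⁿ`. -/
noncomputable def colVec {K : Type*} [Field K] [NumberField K] {n : ℕ}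
    (m : Matrix (Fin n) (Fin n) (𝓞 K)) (i : Fin n) : Fin n → K :=
  fun j => algebraMap (𝓞 K) K (m j i)

/-- The modular symbol `[m₁,…,mₙ]` attached to a matrix `m` over `𝒪` with nonzero
columns `m₁,…,mₙ`. -/
noncomputable def matrixSymbol {K : Type*} [Field K] [NumberField K] {n : ℕ}
    (m : Matrix (Fin n) (Fin n) (𝓞 K)) (h : ∀ i, colVec m i ≠ 0) :
    ModularSymbols K n :=
  QuotientAddGroup.mk (of (fun i => (⟨colVec m i, h i⟩ : NZVec K n)))

set_option synthInstance.maxHeartbeats 1000000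
set_option maxHeartbeats 2000000
set_option linter.unusedSectionVars false

section Rels
variable {K : Type*} [Field K] {n : ℕ}

lemma mk_of_update (v : Fin n → NZVec K n) (i : Fin n) (q : Kˣ)
    (h : (q : K) • (v i : Fin n → K) ≠ 0) :
    (QuotientAddGroup.mk (of (Function.update v i ⟨(q : K) • (v i : Fin n → K), h⟩)) :
      ModularSymbols K n) = QuotientAddGroup.mk (of v) := by
  rw [QuotientAddGroup.eq]
  have h1 : of (Function.update v i ⟨(q : K) • (v i : Fin n → K), h⟩) - of v ∈
      AddSubgroup.closure (modularSymbolRels K n) := by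
    apply AddSubgroup.subset_closure
    rw [modularSymbolRels]
    refine Or.inl (Or.inl (Or.inr ⟨v, i, q, h, rfl⟩))
  simpa [neg_sub, sub_eq_neg_add] using AddSubgroup.neg_mem _ h1

lemma mk_of_scale (q : Kˣ) (v : Fin n → NZVec K n) :
    ∀ s : Finset (Fin n), ∀ w : Fin n → NZVec K n,
      (∀ i ∈ s, (w i : Fin n → K) = (q : K) • (v i : Fin n → K)) →
      (∀ i ∉ s, w i = v i) →
      (QuotientAddGroup.mk (of w) : ModularSymbols K n) = QuotientAddGroup.mk (of v) := by
  classical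
  intro s
  induction s using Finset.induction_on with
  | empty =>
    intro w _ h2
    have : w = v := funext fun i => h2 i (by simp)
    rw [this]
  | @insert a s ha ih =>
    intro w h1 h2
    set w' : Fin n → NZVec K n := Function.update w a (v a) with hw'
    have hw'a : w' a = v a := Function.update_self a (v a) w
    have hw'ne : ∀ i, i ≠ a → w' i = w i := fun i hi => Function.update_of_ne hi _ w
    have ih' : (QuotientAddGroup.mk (of w') : ModularSymbols K n) = QuotientAddGroup.mk (of v) := by
      refine ih w' (fun i hi => ?_) (fun i hi => ?_)
      · have hia : i ≠ a := fun e => ha (e ▸ hi)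
        rw [hw'ne i hia]; exact h1 i (Finset.mem_insert_of_mem hi)
      · by_cases hia : i = a
        · subst hia; exact hw'a
        · rw [hw'ne i hia]; exact h2 i (by simp [hia, hi])
    have hnz : (q : K) • (w' a : Fin n → K) ≠ 0 := by
      rw [hw'a]
      rw [← h1 a (Finset.mem_insert_self a s)]
      exact (w a).2
    have hkey : w = Function.update w' a ⟨(q : K) • (w' a : Fin n → K), hnz⟩ := by
      funext i
      by_cases hia : i = a
      · subst hia
        rw [Function.update_self]
        apply Subtype.ext
        show (w i : Fin n → K) = (q : K) • (w' i : Fin n → K)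
        rw [hw'a]
        exact h1 i (Finset.mem_insert_self i s)
      · rw [Function.update_of_ne hia, hw'ne i hia]
    rw [hkey, mk_of_update w' a q hnz, ih']

lemma mk_of_smul (q : Kˣ) (v w : Fin n → NZVec K n)
    (h : ∀ i, (w i : Fin n → K) = (q : K) • (v i : Fin n → K)) :
    (QuotientAddGroup.mk (of w) : ModularSymbols K n) = QuotientAddGroup.mk (of v) :=
  mk_of_scale q v Finset.univ w (fun i _ => h i) (fun i hi => absurd (Finset.mem_univ i) hi)

lemma mk_of_eq_zero (v : Fin n → NZVec K n)
    (h : ¬ LinearIndependent K (fun i => (v i : Fin n → K))) :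
    (QuotientAddGroup.mk (of v) : ModularSymbols K n) = 0 := by
  rw [QuotientAddGroup.eq_zero_iff]
  apply AddSubgroup.subset_closure
  rw [modularSymbolRels]
  exact Or.inl (Or.inr ⟨v, h, rfl⟩)

end Rels

section Mat
variable {K : Type*} [Field K] [NumberField K] {n : ℕ}

lemma colVec_smul (c : 𝓞 K) (m : Matrix (Fin n) (Fin n) (𝓞 K)) (i : Fin n) :
    colVec (c • m) i = (algebraMap (𝓞 K) K c) • colVec m i := by
  funext j
  simp [colVec, Matrix.smul_apply, map_mul]

lemma not_li_colVec_of_det_eq_zero (m : Matrix (Fin n) (Fin n) (𝓞 K)) (hdet : m.det = 0) :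
    ¬ LinearIndependent K (fun i => colVec m i) := by
  intro hli
  have h2 : LinearIndependent K
      (Matrix.col (m.map (algebraMap (𝓞 K) K))) := hli
  rw [Matrix.linearIndependent_cols_iff_isUnit] at h2
  have h3 := (Matrix.isUnit_iff_isUnit_det _).mp h2
  rw [← RingHom.mapMatrix_apply, ← RingHom.map_det, hdet, map_zero] at h3
  exact h3.ne_zero rfl

lemma det_dvd_cast_factorial (C : ℤ) (d : 𝓞 K) (hd : d ≠ 0)
    (hC : |Algebra.norm ℤ d| ≤ C) : d ∣ ((C.toNat).factorial : 𝓞 K) := by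
  set N : ℕ := (Algebra.norm ℤ d).natAbs with hN
  have h1 : d ∣ (N : 𝓞 K) := by
    have h := Ideal.absNorm_mem (Ideal.span {d})
    rw [Ideal.absNorm_span_singleton] at h
    exact Ideal.mem_span_singleton.mp h
  have hN0 : N ≠ 0 := by
    simp only [hN, Int.natAbs_ne_zero]
    exact fun h => hd ((Algebra.norm_eq_zero_iff).mp h)
  have hNC : N ≤ C.toNat := by
    have : (N : ℤ) ≤ C := by rw [hN, ← Int.abs_eq_natAbs]; exact hC
    exact (Int.le_toNat (le_trans (by positivity) hC)).mpr this
  exact h1.trans (Nat.cast_dvd_cast (Nat.dvd_factorial (Nat.pos_of_ne_zero hN0) hNC))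

def rowSpan (m : Matrix (Fin n) (Fin n) (𝓞 K)) : Submodule (𝓞 K) (Fin n → 𝓞 K) :=
  Submodule.span (𝓞 K) (Set.range fun i => m i)

lemma det_smul_mem_rowSpan (m : Matrix (Fin n) (Fin n) (𝓞 K)) (v : Fin n → 𝓞 K) :
    m.det • v ∈ rowSpan m := by
  have hrow : ∀ j : Fin n, m.det • (Pi.single j 1 : Fin n → 𝓞 K) ∈ rowSpan m := by
    intro j
    have h1 : (m.adjugate * m) j = m.det • (Pi.single j 1 : Fin n → 𝓞 K) := by
      rw [Matrix.adjugate_mul]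
      funext k
      simp [Matrix.smul_apply, Matrix.one_apply, Pi.single_apply, eq_comm]
    have h2 : (m.adjugate * m) j = ∑ l, m.adjugate j l • m l := by
      funext k
      simp [Matrix.mul_apply, Finset.sum_apply]
    rw [← h1, h2]
    exact Submodule.sum_mem _ fun l _ =>
      Submodule.smul_mem _ _ (Submodule.subset_span ⟨l, rfl⟩)
  have hv : v = ∑ j, v j • (Pi.single j 1 : Fin n → 𝓞 K) := by
    rw [← Finset.univ_sum_single v]
    refine Finset.sum_congr rfl fun j _ => ?_
    funext k
    simp [Pi.single_apply, mul_ite]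
  have key : m.det • v = ∑ j, v j • (m.det • (Pi.single j 1 : Fin n → 𝓞 K)) := by
    conv_lhs => rw [hv]
    rw [Finset.smul_sum]
    exact Finset.sum_congr rfl fun j _ => smul_comm _ _ _
  rw [key]
  exact Submodule.sum_mem _ fun j _ => Submodule.smul_mem _ _ (hrow j)

lemma smul_mem_of_det_dvd (m : Matrix (Fin n) (Fin n) (𝓞 K)) (c : 𝓞 K)
    (hdvd : m.det ∣ c) (v : Fin n → 𝓞 K) : c • v ∈ rowSpan m := by
  obtain ⟨b, rfl⟩ := hdvd
  rw [mul_comm, mul_smul]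
  exact Submodule.smul_mem _ _ (det_smul_mem_rowSpan m v)

lemma finite_lattices (Mf : ℕ) (hM : Mf ≠ 0) :
    {R : Submodule (𝓞 K) (Fin n → 𝓞 K) | ∀ v, (Mf : 𝓞 K) • v ∈ R}.Finite := by
  classical
  set I : Ideal (𝓞 K) := Ideal.span {(Mf : 𝓞 K)} with hI
  have hIne : I ≠ ⊥ := by
    rw [hI, Ne, Ideal.span_singleton_eq_bot]
    exact_mod_cast hM
  haveI := @Fintype.ofFinite _ (Ideal.finiteQuotientOfFreeOfNeBot I hIne)
  haveI : Finite ((𝓞 K) ⧸ I) := Finite.of_fintype _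
  haveI : Finite (Fin n → (𝓞 K) ⧸ I) := inferInstance
  haveI : Finite (Set (Fin n → (𝓞 K) ⧸ I)) := inferInstance
  set σ : (Fin n → 𝓞 K) → (Fin n → (𝓞 K) ⧸ I) := fun v i => Ideal.Quotient.mk I (v i) with hσ
  rw [← Set.finite_coe_iff]
  refine Finite.of_injective
    (fun R : {R : Submodule (𝓞 K) (Fin n → 𝓞 K) | ∀ v, (Mf : 𝓞 K) • v ∈ R} =>
      σ '' (R.1 : Set (Fin n → 𝓞 K))) ?_
  rintro ⟨R₁, hR₁⟩ ⟨R₂, hR₂⟩ himg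
  have key : ∀ (R R' : Submodule (𝓞 K) (Fin n → 𝓞 K)), (∀ v, (Mf : 𝓞 K) • v ∈ R') →
      σ '' R = σ '' R' → ∀ x ∈ R, x ∈ R' := by
    intro R R' hR' himg x hx
    have : σ x ∈ σ '' (R' : Set _) := himg ▸ ⟨x, hx, rfl⟩
    obtain ⟨y, hy, hxy⟩ := this
    have hdiff : ∀ i, ∃ w, x i - y i = (Mf : 𝓞 K) * w := by
      intro i
      have : Ideal.Quotient.mk I (x i - y i) = 0 := by
        rw [map_sub, sub_eq_zero]
        exact (congrFun hxy i).symm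
      obtain ⟨w, hw⟩ := Ideal.mem_span_singleton.mp (Ideal.Quotient.eq_zero_iff_mem.mp this)
      exact ⟨w, hw⟩
    choose w hw using hdiff
    have hxw : x = y + (Mf : 𝓞 K) • w := by
      funext i
      have := hw i
      simp only [Pi.add_apply, Pi.smul_apply, smul_eq_mul]
      linear_combination this
    rw [hxw]
    exact R'.add_mem hy (hR' w)
  simp only [Subtype.mk.injEq]
  ext x
  exact ⟨fun hx => key R₁ R₂ hR₂ himg x hx, fun hx => key R₂ R₁ hR₁ himg.symm x hx⟩

lemma exists_matrix_mul (m t : Matrix (Fin n) (Fin n) (𝓞 K))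
    (h : ∀ i, m i ∈ rowSpan t) : ∃ u : Matrix (Fin n) (Fin n) (𝓞 K), m = u * t := by
  have h' : ∀ i, ∃ c : Fin n → 𝓞 K, ∑ j, c j • t j = m i := by
    intro i
    exact (Submodule.mem_span_range_iff_exists_fun _).mp (h i)
  choose u hu using h'
  refine ⟨Matrix.of u, ?_⟩
  refine Matrix.ext (fun i k => ?_)
  rw [Matrix.mul_apply]
  have := congrFun (hu i) k
  simpa [Finset.sum_apply] using this.symm

lemma eq_one_of_mul_eq_self (t B : Matrix (Fin n) (Fin n) (𝓞 K))
    (hdet : t.det ≠ 0) (h : B * t = t) : B = 1 := by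
  have hinj : Function.Injective (algebraMap (𝓞 K) K) := IsFractionRing.injective (𝓞 K) K
  set φ := algebraMap (𝓞 K) K
  set tk := t.map φ with htk
  have hdetk : tk.det ≠ 0 := by
    rw [htk, ← RingHom.mapMatrix_apply, ← RingHom.map_det]
    exact fun hh => hdet (hinj (by rw [hh, map_zero]))
  haveI : Invertible tk := tk.invertibleOfIsUnitDet (isUnit_iff_ne_zero.mpr hdetk)
  have hk : (B.map φ) * tk = tk := by
    rw [htk, ← Matrix.map_mul, h]
  have : B.map φ = 1 := by
    calc B.map φ = (B.map φ) * (tk * ⅟tk) := by rw [mul_invOf_self, mul_one]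
      _ = ((B.map φ) * tk) * ⅟tk := by rw [mul_assoc]
      _ = tk * ⅟tk := by rw [hk]
      _ = 1 := mul_invOf_self tk
  have h1 : (1 : Matrix (Fin n) (Fin n) (𝓞 K)).map φ = 1 :=
    Matrix.map_one φ (map_zero φ) (map_one φ)
  exact Matrix.map_injective hinj (this.trans h1.symm)

lemma matrixSymbol_congr (m₁ m₂ : Matrix (Fin n) (Fin n) (𝓞 K))
    (h₁ : ∀ i, colVec m₁ i ≠ 0) (e : m₁ = m₂) :
    matrixSymbol m₁ h₁ = matrixSymbol m₂ (e ▸ h₁) := by subst e; rfl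

lemma matrixSymbol_unit_smul (δ : (𝓞 K)ˣ) (m : Matrix (Fin n) (Fin n) (𝓞 K))
    (h : ∀ i, colVec m i ≠ 0) (h₂ : ∀ i, colVec ((δ : 𝓞 K) • m) i ≠ 0) :
    matrixSymbol ((δ : 𝓞 K) • m) h₂ = matrixSymbol m h := by
  unfold matrixSymbol
  set q : Kˣ := Units.map (algebraMap (𝓞 K) K : 𝓞 K →+* K).toMonoidHom δ with hq
  refine mk_of_smul q _ _ (fun i => ?_)
  show colVec ((δ : 𝓞 K) • m) i = (q : K) • colVec m i
  rw [colVec_smul]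
  congr 1

lemma matrixSymbol_eq_zero (m : Matrix (Fin n) (Fin n) (𝓞 K))
    (h : ∀ i, colVec m i ≠ 0) (hdet : m.det = 0) : matrixSymbol m h = 0 := by
  unfold matrixSymbol
  exact mk_of_eq_zero _ (not_li_colVec_of_det_eq_zero m hdet)

end Mat

lemma finite_units_quotient (K : Type*) [Field K] [NumberField K] (n : ℕ) (hn : n ≠ 0) :
    Finite ((𝓞 K)ˣ ⧸ (powMonoidHom n : (𝓞 K)ˣ →* (𝓞 K)ˣ).range) := by
  haveI : Group.FG (𝓞 K)ˣ := Group.fg_iff_monoid_fg.mpr inferInstance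
  apply CommGroup.finite_of_fg_torsion
  intro x
  obtain ⟨g, rfl⟩ := QuotientGroup.mk_surjective x
  refine isOfFinOrder_iff_pow_eq_one.mpr ⟨n, Nat.pos_of_ne_zero hn, ?_⟩
  have h1 : ((QuotientGroup.mk g : (𝓞 K)ˣ ⧸ (powMonoidHom n : (𝓞 K)ˣ →* (𝓞 K)ˣ).range)) ^ n
      = QuotientGroup.mk (g ^ n) := rfl
  rw [h1, QuotientGroup.eq_one_iff]
  exact ⟨g, rfl⟩


/-- Let `Γ ⊆ SL_n(𝒪)` be a finite-index subgroup and `C ≥ 1` an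
integer.  The set `𝓜(C)` of modular symbols coming from matrices `m` over `𝒪` with
`|N_{K/ℚ}(det m)| ≤ C` is a finite union of `Γ`-orbits: there are finitely many matrices
`t` with symbols in `𝓜(C)` such that every symbol of `𝓜(C)` equals `γ • [t] = [γ·t]` for
some `γ ∈ Γ` and some `t` among them. -/
theorem modularSymbols_bounded_norm_finite_orbits
    (K : Type*) [Field K] [NumberField K] (n : ℕ) (C : ℤ) (hC : 1 ≤ C)
    (Γ : Subgroup (Matrix.SpecialLinearGroup (Fin n) (𝓞 K))) (hΓ : Γ.FiniteIndex) :
    ∃ T : Finset (Matrix (Fin n) (Fin n) (𝓞 K)),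
      (∀ t ∈ T, |Algebra.norm ℤ t.det| ≤ C) ∧
      ∀ (m : Matrix (Fin n) (Fin n) (𝓞 K)) (h : ∀ i, colVec m i ≠ 0),
        |Algebra.norm ℤ m.det| ≤ C →
        ∃ t ∈ T, ∃ γ ∈ Γ,
          ∃ h' : ∀ i, colVec ((γ : Matrix.SpecialLinearGroup (Fin n) (𝓞 K)) * t :
              Matrix (Fin n) (Fin n) (𝓞 K)) i ≠ 0,
            matrixSymbol m h
              = matrixSymbol ((γ : Matrix.SpecialLinearGroup (Fin n) (𝓞 K)) * t :
                  Matrix (Fin n) (Fin n) (𝓞 K)) h' := by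
  classical
  haveI := hΓ
  by_cases hn0 : n = 0
  · subst hn0
    refine ⟨{1}, ?_, ?_⟩
    · intro t ht
      rw [Finset.mem_singleton] at ht
      subst ht
      rw [Matrix.det_one, map_one, abs_one]
      exact hC
    · intro m h hm
      refine ⟨1, Finset.mem_singleton_self 1, 1, Γ.one_mem, fun i => i.elim0, ?_⟩
      unfold matrixSymbol
      exact congrArg _ (congrArg _ (funext fun i => i.elim0))
  · have hn : 0 < n := Nat.pos_of_ne_zero hn0
    set i0 : Fin n := ⟨0, hn⟩ with hi0
    set LS : Set (Submodule (𝓞 K) (Fin n → 𝓞 K)) :=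
      {R | ∃ t : Matrix (Fin n) (Fin n) (𝓞 K),
        t.det ≠ 0 ∧ |Algebra.norm ℤ t.det| ≤ C ∧ rowSpan t = R} with hLS
    have hLSfin : LS.Finite := by
      refine (finite_lattices (C.toNat.factorial) (Nat.factorial_ne_zero _)).subset ?_
      rintro R ⟨t, ht0, htC, rfl⟩ v
      exact smul_mem_of_det_dvd t _ (det_dvd_cast_factorial C t.det ht0 htC) v
    haveI : Finite ↥LS := hLSfin.to_subtype
    have tch_ex : ∀ R : ↥LS, ∃ t : Matrix (Fin n) (Fin n) (𝓞 K),
        t.det ≠ 0 ∧ |Algebra.norm ℤ t.det| ≤ C ∧ rowSpan t = (R : Submodule _ _) :=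
      fun R => R.2
    choose tch htch0 htchC htchR using tch_ex
    set W := (powMonoidHom n : (𝓞 K)ˣ →* (𝓞 K)ˣ).range with hW
    haveI : Finite ((𝓞 K)ˣ ⧸ W) := finite_units_quotient K n hn0
    set gm : (𝓞 K)ˣ → Matrix (Fin n) (Fin n) (𝓞 K) :=
      fun e => Matrix.diagonal (Function.update (fun _ => (1 : 𝓞 K)) i0 (e : 𝓞 K)) with hgm
    have hgm_det : ∀ e : (𝓞 K)ˣ, (gm e).det = (e : 𝓞 K) := by
      intro e
      rw [hgm]
      rw [Matrix.det_diagonal, Finset.prod_update_of_mem (Finset.mem_univ i0)]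
      simp
    have hgm_mul : ∀ e : (𝓞 K)ˣ, gm e⁻¹ * gm e = 1 := by
      intro e
      show Matrix.diagonal _ * Matrix.diagonal _ = 1
      rw [Matrix.diagonal_mul_diagonal]
      have hfun : (fun k => Function.update (fun _ => (1 : 𝓞 K)) i0 ((e⁻¹ : (𝓞 K)ˣ) : 𝓞 K) k *
          Function.update (fun _ => (1 : 𝓞 K)) i0 (e : 𝓞 K) k) = fun _ => (1 : 𝓞 K) := by
        funext k
        by_cases hk : k = i0
        · subst hk
          simp [Function.update_self]
        · simp [Function.update_of_ne hk]
      rw [hfun, Matrix.diagonal_one]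
    set t0 : Matrix (Fin n) (Fin n) (𝓞 K) :=
      Matrix.of (fun i _ => if i = i0 then (1 : 𝓞 K) else 0) with ht0def
    set F : (Matrix.SpecialLinearGroup (Fin n) (𝓞 K) ⧸ Γ) × ((𝓞 K)ˣ ⧸ W) × ↥LS →
        Matrix (Fin n) (Fin n) (𝓞 K) :=
      fun p => ((p.1.out⁻¹ : Matrix.SpecialLinearGroup (Fin n) (𝓞 K)) :
          Matrix (Fin n) (Fin n) (𝓞 K)) * (gm p.2.1.out * tch p.2.2) with hF
    have hTfin : (Set.range F ∪ {t0}).Finite :=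
      (Set.finite_range F).union (Set.finite_singleton _)
    refine ⟨hTfin.toFinset, ?_, ?_⟩
    · intro t ht
      rw [Set.Finite.mem_toFinset] at ht
      rcases ht with ⟨p, rfl⟩ | ht
      · rw [hF]
        simp only []
        rw [Matrix.det_mul, Matrix.det_mul, Matrix.SpecialLinearGroup.det_coe, one_mul,
          hgm_det, map_mul, abs_mul]
        have hu : |Algebra.norm ℤ ((p.2.1.out : (𝓞 K)ˣ) : 𝓞 K)| = 1 := by
          have h1 : IsUnit (Algebra.norm ℤ ((p.2.1.out : (𝓞 K)ˣ) : 𝓞 K)) :=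
            (p.2.1.out).isUnit.map (Algebra.norm ℤ)
          rcases Int.isUnit_iff.mp h1 with h2 | h2 <;> rw [h2] <;> simp
        rw [hu, one_mul]
        exact htchC p.2.2
      · rw [Set.mem_singleton_iff] at ht
        subst ht
        by_cases h2 : 2 ≤ n
        · have hdt0 : t0.det = 0 := by
            refine Matrix.det_eq_zero_of_row_eq_zero ⟨1, h2⟩ (fun k => ?_)
            rw [ht0def]
            have : (⟨1, h2⟩ : Fin n) ≠ i0 := by
              rw [hi0, Ne, Fin.ext_iff]
              simp
            simp [this]
          rw [hdt0, Algebra.norm_zero, abs_zero]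
          omega
        · have hn1 : n = 1 := by omega
          have ht01 : t0 = 1 := by
            refine Matrix.ext fun i j => ?_
            have hii : i = i0 := by
              rw [hi0, Fin.ext_iff]
              have := i.isLt
              omega
            have hij : i = j := by
              rw [Fin.ext_iff]
              have := i.isLt
              have := j.isLt
              omega
            rw [ht0def]
            simp [Matrix.one_apply, hii, hij.symm]
          rw [ht01, Matrix.det_one, map_one, abs_one]
          exact hC
    · intro m h hm
      by_cases hdm : m.det = 0
      · have hnli := not_li_colVec_of_det_eq_zero m hdm
        obtain ⟨g, hsum, i, hgi⟩ := Fintype.not_linearIndependent_iff.mp hnli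
        have hj : ∃ j : Fin n, j ≠ i := by
          by_contra hno
          push_neg at hno
          have hss : ∑ j, g j • colVec m j = g i • colVec m i :=
            Fintype.sum_eq_single i (fun j hji => absurd (hno j) hji)
          rw [hss] at hsum
          rcases smul_eq_zero.mp hsum with h1 | h1
          · exact hgi h1
          · exact h i h1
        obtain ⟨j, hji⟩ := hj
        have h2n : 2 ≤ n := by
          by_contra hlt
          refine hji (Fin.ext ?_)
          have := i.isLt
          have := j.isLt
          omega
        have hdt0 : t0.det = 0 := by
          refine Matrix.det_eq_zero_of_row_eq_zero ⟨1, h2n⟩ (fun k => ?_)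
          rw [ht0def]
          have hne : (⟨1, h2n⟩ : Fin n) ≠ i0 := by
            rw [hi0, Ne, Fin.ext_iff]
            simp
          simp [hne]
        have ht0T : t0 ∈ hTfin.toFinset := by
          rw [Set.Finite.mem_toFinset]
          exact Or.inr rfl
        have hone : (((1 : Matrix.SpecialLinearGroup (Fin n) (𝓞 K))) :
            Matrix (Fin n) (Fin n) (𝓞 K)) * t0 = t0 := by
          rw [Matrix.SpecialLinearGroup.coe_one, one_mul]
        have hcol : ∀ i, colVec ((((1 : Matrix.SpecialLinearGroup (Fin n) (𝓞 K))) :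
            Matrix (Fin n) (Fin n) (𝓞 K)) * t0) i ≠ 0 := by
          intro i heq
          rw [hone] at heq
          have hc := congrFun heq i0
          rw [ht0def] at hc
          simp [colVec] at hc
        refine ⟨t0, ht0T, 1, Γ.one_mem, hcol, ?_⟩
        rw [matrixSymbol_eq_zero m h hdm, matrixSymbol_eq_zero _ hcol (by rw [hone]; exact hdt0)]
      · have hmem : rowSpan m ∈ LS := ⟨m, hdm, hm, rfl⟩
        set Rm : ↥LS := ⟨rowSpan m, hmem⟩ with hRm
        set t := tch Rm with htdef
        have hrs : rowSpan t = rowSpan m := htchR Rm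
        obtain ⟨u, hu⟩ := exists_matrix_mul m t (fun i => by
          have hmi : m i ∈ rowSpan m := Submodule.subset_span ⟨i, rfl⟩
          rwa [← hrs] at hmi)
        obtain ⟨u', hu'⟩ := exists_matrix_mul t m (fun i => by
          have hti : t i ∈ rowSpan t := Submodule.subset_span ⟨i, rfl⟩
          rwa [hrs] at hti)
        have huu' : u * u' = 1 := by
          apply eq_one_of_mul_eq_self m _ hdm
          rw [mul_assoc, ← hu', ← hu]
        have hdu : IsUnit u.det := by
          apply IsUnit.of_mul_eq_one u'.det
          rw [← Matrix.det_mul, huu', Matrix.det_one]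
        set ε : (𝓞 K)ˣ := hdu.unit with hε
        obtain ⟨w, hw⟩ := QuotientGroup.mk_out_eq_mul W ε
        obtain ⟨δ, hδ⟩ := MonoidHom.mem_range.mp w.2
        rw [powMonoidHom_apply] at hδ
        set e : (𝓞 K)ˣ := (QuotientGroup.mk ε : (𝓞 K)ˣ ⧸ W).out with he
        have hee : e = ε * δ ^ n := by
          rw [hw, ← hδ]
        set m₂ : Matrix (Fin n) (Fin n) (𝓞 K) := ((δ : 𝓞 K)) • m with hm₂
        have hm₂u : m₂ = ((δ : 𝓞 K) • u) * t := by
          rw [hm₂, hu, Matrix.smul_mul]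
        have hdet₂ : ((δ : 𝓞 K) • u).det = (e : 𝓞 K) := by
          rw [Matrix.det_smul, Fintype.card_fin, ← hdu.unit_spec, ← hε,
            ← Units.val_pow_eq_pow_val, ← Units.val_mul, hee, mul_comm]
        have hsdet : (((δ : 𝓞 K) • u) * gm e⁻¹).det = 1 := by
          rw [Matrix.det_mul, hdet₂, hgm_det, ← Units.val_mul, mul_inv_cancel, Units.val_one]
        set S : Matrix.SpecialLinearGroup (Fin n) (𝓞 K) := ⟨_, hsdet⟩ with hS
        have hm₂S : m₂ = (S : Matrix (Fin n) (Fin n) (𝓞 K)) * (gm e * t) := by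
          show m₂ = (((δ : 𝓞 K) • u) * gm e⁻¹) * (gm e * t)
          rw [mul_assoc, ← mul_assoc (gm e⁻¹), hgm_mul, one_mul, ← hm₂u]
        obtain ⟨γ', hγ'⟩ := QuotientGroup.mk_out_eq_mul Γ S⁻¹
        set jq : Matrix.SpecialLinearGroup (Fin n) (𝓞 K) ⧸ Γ := QuotientGroup.mk S⁻¹ with hjq
        have hSdec : S = (γ' : Matrix.SpecialLinearGroup (Fin n) (𝓞 K)) * jq.out⁻¹ := by
          have h1 : S⁻¹ = jq.out * ((γ' : Matrix.SpecialLinearGroup (Fin n) (𝓞 K)))⁻¹ := by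
            rw [hjq, hγ']
            group
          calc S = (S⁻¹)⁻¹ := (inv_inv S).symm
            _ = (jq.out * ((γ' : Matrix.SpecialLinearGroup (Fin n) (𝓞 K)))⁻¹)⁻¹ := by rw [h1]
            _ = (γ' : Matrix.SpecialLinearGroup (Fin n) (𝓞 K)) * jq.out⁻¹ := by group
        set tF := F (jq, QuotientGroup.mk ε, Rm) with htF
        have htFT : tF ∈ hTfin.toFinset := by
          rw [Set.Finite.mem_toFinset]
          exact Or.inl ⟨_, rfl⟩
        have hmatrix : ((γ' : Matrix.SpecialLinearGroup (Fin n) (𝓞 K)) :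
            Matrix (Fin n) (Fin n) (𝓞 K)) * tF = m₂ := by
          rw [htF, hF]
          show ((γ' : Matrix.SpecialLinearGroup (Fin n) (𝓞 K)) :
              Matrix (Fin n) (Fin n) (𝓞 K)) * (((jq.out⁻¹ :
                Matrix.SpecialLinearGroup (Fin n) (𝓞 K)) :
              Matrix (Fin n) (Fin n) (𝓞 K)) * (gm e * t)) = m₂
          rw [← mul_assoc, ← Matrix.SpecialLinearGroup.coe_mul, ← hSdec, ← hm₂S]
        have hcol₂ : ∀ i, colVec m₂ i ≠ 0 := by
          intro i heq
          rw [hm₂, colVec_smul] at heq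
          rcases smul_eq_zero.mp heq with h1 | h1
          · have : ((δ : 𝓞 K)) ≠ 0 := Units.ne_zero δ
            exact this (IsFractionRing.injective (𝓞 K) K (by rw [h1, map_zero]))
          · exact h i h1
        have hcol' : ∀ i, colVec (((γ' : Matrix.SpecialLinearGroup (Fin n) (𝓞 K)) :
            Matrix (Fin n) (Fin n) (𝓞 K)) * tF) i ≠ 0 := by
          intro i
          rw [hmatrix]
          exact hcol₂ i
        refine ⟨tF, htFT, (γ' : Matrix.SpecialLinearGroup (Fin n) (𝓞 K)), γ'.2, hcol', ?_⟩
        have e1 : matrixSymbol m₂ hcol₂ = matrixSymbol m h :=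
          matrixSymbol_unit_smul δ m h hcol₂
        have e2 := matrixSymbol_congr m₂ _ hcol₂ hmatrix.symm
        rw [← e1, e2]
end
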